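/- Let n ≥ 1. For M, N ∈ U(n,n) define w(M,N;Z) := (1/(2π))·(L(MN,Z) − L(M,N⟨Z⟩) − L(N,Z)) for Z ∈ ℋ_n. Then w(M,N;Z) is an integer and is independent of Z (so one may write w(M,N)), and w is a cocycle: w(M₁M₂,M₃) + w(M₁,M₂) = w(M₁,M₂M₃) + w(M₂,M₃) for all M₁,M₂,M₃ ∈ U(n,n), and w(E,M) = w(M,E) = 0 for all M ∈ U(n,n), where E denotes the identity of U(n,n). -/

import Mathlib

noncomputable section
open Matrix Complex
open scoped ComplexOrder

/-- Complex 2n×2n matrices, written in n×n blocks. -/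
abbrev HMat (n : ℕ) : Type := Matrix (Fin n ⊕ Fin n) (Fin n ⊕ Fin n) ℂ

/-- The standard alternating matrix I = ((0,-E),(E,0)). -/
def Imat (n : ℕ) : HMat n := Matrix.fromBlocks 0 (-1) 1 0

/-- The unitary group U(n,n). -/
def UGrp (n : ℕ) : Set (HMat n) := {M | Mᴴ * Imat n * M = Imat n}

/-- The Hermitian upper half-plane: Z = X + iY with X Hermitian and
Y = (Z - Zᴴ)/(2i) Hermitian positive definite. -/
def UHP (n : ℕ) : Set (Matrix (Fin n) (Fin n) ℂ) :=
  {Z | ((2 * Complex.I)⁻¹ • (Z - Zᴴ)).PosDef}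

/-- The action M⟨Z⟩ = (AZ+B)(CZ+D)⁻¹. -/
def matAct {n : ℕ} (M : HMat n) (Z : Matrix (Fin n) (Fin n) ℂ) :
    Matrix (Fin n) (Fin n) ℂ :=
  (M.toBlocks₁₁ * Z + M.toBlocks₁₂) * (M.toBlocks₂₁ * Z + M.toBlocks₂₂)⁻¹

/-- The automorphy factor J(M,Z) = det(CZ+D). -/
def Jfac {n : ℕ} (M : HMat n) (Z : Matrix (Fin n) (Fin n) ℂ) : ℂ :=
  (M.toBlocks₂₁ * Z + M.toBlocks₂₂).det

/-- The distinguished point iE of the upper half-plane. -/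
def iE (n : ℕ) : Matrix (Fin n) (Fin n) ℂ := Complex.I • 1

/-- `L` is the continuous choice of the argument of J(M,Z), normalized so that
`L M (iE)` is the principal value. -/
def IsArgOfJ (n : ℕ) (L : HMat n → Matrix (Fin n) (Fin n) ℂ → ℝ) : Prop :=
  ∀ M ∈ UGrp n, ContinuousOn (L M) (UHP n) ∧
    (∀ Z ∈ UHP n,
      Complex.exp (Complex.I * (L M Z : ℝ)) = Jfac M Z / (‖Jfac M Z‖ : ℂ)) ∧
    L M (iE n) ∈ Set.Ioc (-Real.pi) Real.pi

/-- w(M,N;Z) = (1/2π)(L(MN,Z) - L(M,N⟨Z⟩) - L(N,Z)). -/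
def wAt {n : ℕ} (L : HMat n → Matrix (Fin n) (Fin n) ℂ → ℝ)
    (M N : HMat n) (Z : Matrix (Fin n) (Fin n) ℂ) : ℝ :=
  (L (M * N) Z - L M (matAct N Z) - L N Z) / (2 * Real.pi)

/-- The cocycle w(M,N), i.e. the common value of w(M,N;Z), evaluated at Z = iE. -/
def wcoc {n : ℕ} (L : HMat n → Matrix (Fin n) (Fin n) ℂ → ℝ) (M N : HMat n) : ℝ :=
  wAt L M N (iE n)

/-!
Stacking `Z` over `E`, one has `M (Z; E) = (AZ+B; CZ+D)`. Hence `Mᴴ I M = I` gives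
`(CZ+D)ᴴ(AZ+B) - (AZ+B)ᴴ(CZ+D) = Z - Zᴴ`, which shows that `CZ+D` is invertible and that `M`
preserves `ℋ_n`, and associativity gives `J(MN,Z) = J(M,N⟨Z⟩) J(N,Z)`. The latter says that
`exp(2πi w(M,N;Z)) = 1`, so `w(M,N;·)` is a continuous integer-valued function on the convex
set `ℋ_n`, hence constant. Evaluating `w(M₁,M₂)` at `M₃⟨Z⟩` instead of `Z` turns the cocycle
identity into a tautology, and the normalization at `iE` forces `L(E,·) = 0`.
-/

namespace UnitaryGroupAction

variable {n : ℕ}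

lemma one_mem_UGrp : (1 : HMat n) ∈ UGrp n := by
  simp [UGrp]

lemma mul_mem_UGrp {M N : HMat n} (hM : M ∈ UGrp n) (hN : N ∈ UGrp n) : M * N ∈ UGrp n := by
  simp only [UGrp, Set.mem_ofPred_eq] at *
  rw [conjTranspose_mul, show Nᴴ * Mᴴ * Imat n * (M * N) = Nᴴ * (Mᴴ * Imat n * M) * N by
    noncomm_ring, hM, hN]

def actNum (M : HMat n) (Z : Matrix (Fin n) (Fin n) ℂ) : Matrix (Fin n) (Fin n) ℂ :=
  M.toBlocks₁₁ * Z + M.toBlocks₁₂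

def actDen (M : HMat n) (Z : Matrix (Fin n) (Fin n) ℂ) : Matrix (Fin n) (Fin n) ℂ :=
  M.toBlocks₂₁ * Z + M.toBlocks₂₂

lemma matAct_eq (M : HMat n) (Z : Matrix (Fin n) (Fin n) ℂ) :
    matAct M Z = actNum M Z * (actDen M Z)⁻¹ := rfl

lemma Jfac_eq (M : HMat n) (Z : Matrix (Fin n) (Fin n) ℂ) : Jfac M Z = (actDen M Z).det := rfl

def frame (Z : Matrix (Fin n) (Fin n) ℂ) : Matrix (Fin n ⊕ Fin n) (Fin n) ℂ := fromRows Z 1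

lemma mul_frame (M : Matrix (Fin n ⊕ Fin n) (Fin n ⊕ Fin n) ℂ) (Z : Matrix (Fin n) (Fin n) ℂ) :
    M * frame Z = fromRows (actNum M Z) (actDen M Z) := by
  rw [frame, ← fromBlocks_toBlocks M, fromBlocks_mul_fromRows]
  simp [actNum, actDen]

lemma fromRows_actNum_actDen_mul (M N : Matrix (Fin n ⊕ Fin n) (Fin n ⊕ Fin n) ℂ)
    {Z : Matrix (Fin n) (Fin n) ℂ} (hZ : IsUnit (actDen N Z).det) :
    fromRows (actNum (M * N) Z) (actDen (M * N) Z)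
      = fromRows (actNum M (matAct N Z)) (actDen M (matAct N Z)) * actDen N Z := by
  rw [← mul_frame, ← mul_frame, Matrix.mul_assoc, mul_frame N, Matrix.mul_assoc, frame,
    fromRows_mul, matAct_eq, Matrix.mul_assoc, nonsing_inv_mul _ hZ, Matrix.mul_one,
    Matrix.one_mul]

lemma actDen_mul (M N : HMat n) {Z : Matrix (Fin n) (Fin n) ℂ} (hZ : IsUnit (actDen N Z).det) :
    actDen (M * N) Z = actDen M (matAct N Z) * actDen N Z := by
  simpa [fromRows_mul] using congrArg toRows₂ (fromRows_actNum_actDen_mul M N hZ)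

lemma actNum_mul (M N : HMat n) {Z : Matrix (Fin n) (Fin n) ℂ} (hZ : IsUnit (actDen N Z).det) :
    actNum (M * N) Z = actNum M (matAct N Z) * actDen N Z := by
  simpa [fromRows_mul] using congrArg toRows₁ (fromRows_actNum_actDen_mul M N hZ)

lemma Jfac_mul (M N : HMat n) {Z : Matrix (Fin n) (Fin n) ℂ} (hZ : IsUnit (actDen N Z).det) :
    Jfac (M * N) Z = Jfac M (matAct N Z) * Jfac N Z := by
  rw [Jfac_eq, actDen_mul M N hZ, det_mul, Jfac_eq, Jfac_eq]

lemma matAct_mul (M N : HMat n) {Z : Matrix (Fin n) (Fin n) ℂ} (hZ : IsUnit (actDen N Z).det) :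
    matAct (M * N) Z = matAct M (matAct N Z) := by
  rw [matAct_eq, actNum_mul M N hZ, actDen_mul M N hZ, Matrix.mul_inv_rev, Matrix.mul_assoc,
    ← Matrix.mul_assoc (actDen N Z), mul_nonsing_inv _ hZ, Matrix.one_mul, ← matAct_eq]

lemma conjTranspose_fromRows_mul_Imat_mul (P Q : Matrix (Fin n) (Fin n) ℂ) :
    (fromRows P Q)ᴴ * Imat n * fromRows P Q = Qᴴ * P - Pᴴ * Q := by
  rw [Imat, conjTranspose_fromRows_eq_fromCols_conjTranspose, fromCols_mul_fromBlocks,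
    fromCols_mul_fromRows]
  simp only [Matrix.mul_zero, Matrix.mul_neg, Matrix.mul_one, zero_add, add_zero]
  noncomm_ring

lemma actDen_conjTranspose_mul_actNum_sub {M : Matrix (Fin n ⊕ Fin n) (Fin n ⊕ Fin n) ℂ}
    (hM : M ∈ UGrp n) (Z : Matrix (Fin n) (Fin n) ℂ) :
    (actDen M Z)ᴴ * actNum M Z - (actNum M Z)ᴴ * actDen M Z = Z - Zᴴ := by
  have hM : Mᴴ * Imat n * M = Imat n := hM
  rw [← conjTranspose_fromRows_mul_Imat_mul, ← mul_frame, conjTranspose_mul,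
    show (frame Z)ᴴ * Mᴴ * Imat n * (M * frame Z) = (frame Z)ᴴ * (Mᴴ * Imat n * M) * frame Z by
      simp only [Matrix.mul_assoc], hM, frame, conjTranspose_fromRows_mul_Imat_mul]
  simp

def imMat (Z : Matrix (Fin n) (Fin n) ℂ) : Matrix (Fin n) (Fin n) ℂ := (2 * I)⁻¹ • (Z - Zᴴ)

lemma mem_UHP_iff {Z : Matrix (Fin n) (Fin n) ℂ} : Z ∈ UHP n ↔ (imMat Z).PosDef := Iff.rfl

lemma det_actDen_ne_zero {M : HMat n} (hM : M ∈ UGrp n) {Z : Matrix (Fin n) (Fin n) ℂ}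
    (hZ : Z ∈ UHP n) : (actDen M Z).det ≠ 0 := by
  intro hdet
  obtain ⟨v, hv, hQv⟩ := exists_mulVec_eq_zero_iff.2 hdet
  have hzero : star v ⬝ᵥ ((Z - Zᴴ) *ᵥ v) = 0 := by
    rw [← actDen_conjTranspose_mul_actNum_sub hM, sub_mulVec, dotProduct_sub,
      ← mulVec_mulVec, ← mulVec_mulVec, hQv, mulVec_zero, dotProduct_zero, sub_zero,
      dotProduct_mulVec, ← star_mulVec, hQv, star_zero, zero_dotProduct]
  have hpos := (mem_UHP_iff.1 hZ).dotProduct_mulVec_pos hv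
  rw [imMat, smul_mulVec, dotProduct_smul, hzero, smul_zero] at hpos
  exact hpos.ne rfl

lemma isUnit_det_actDen {M : HMat n} (hM : M ∈ UGrp n) {Z : Matrix (Fin n) (Fin n) ℂ}
    (hZ : Z ∈ UHP n) : IsUnit (actDen M Z).det :=
  (det_actDen_ne_zero hM hZ).isUnit

lemma imMat_matAct {M : HMat n} (hM : M ∈ UGrp n) {Z : Matrix (Fin n) (Fin n) ℂ}
    (hZ : IsUnit (actDen M Z).det) :
    imMat (matAct M Z) = (actDen M Z)⁻¹ᴴ * imMat Z * (actDen M Z)⁻¹ := by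
  have hQ : (actDen M Z)⁻¹ᴴ * (actDen M Z)ᴴ = 1 := by
    rw [← conjTranspose_mul, mul_nonsing_inv _ hZ, conjTranspose_one]
  rw [imMat, imMat, ← actDen_conjTranspose_mul_actNum_sub hM Z, matAct_eq, conjTranspose_mul,
    Matrix.mul_smul, Matrix.smul_mul, Matrix.mul_sub, Matrix.sub_mul, ← Matrix.mul_assoc,
    ← Matrix.mul_assoc, hQ, Matrix.one_mul, Matrix.mul_assoc, Matrix.mul_assoc,
    mul_nonsing_inv _ hZ, Matrix.mul_one]

lemma matAct_mem_UHP {M : HMat n} (hM : M ∈ UGrp n) {Z : Matrix (Fin n) (Fin n) ℂ}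
    (hZ : Z ∈ UHP n) : matAct M Z ∈ UHP n := by
  have hQ := isUnit_det_actDen hM hZ
  rw [mem_UHP_iff, imMat_matAct hM hQ]
  exact (mem_UHP_iff.1 hZ).conjTranspose_mul_mul_same
    (mulVec_injective_of_isUnit ((isUnit_nonsing_inv_iff).2 ((isUnit_iff_isUnit_det _).2 hQ)))

lemma continuousOn_matAct {M : HMat n} (hM : M ∈ UGrp n) : ContinuousOn (matAct M) (UHP n) := by
  intro Z hZ
  have hNum : Continuous (actNum M) :=
    (continuous_const.matrix_mul continuous_id).add continuous_const
  have hDen : Continuous (actDen M) :=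
    (continuous_const.matrix_mul continuous_id).add continuous_const
  have hinv : ContinuousAt Inv.inv (actDen M Z) := by
    refine continuousAt_matrix_inv _ ?_
    simpa [Ring.inverse_eq_inv'] using continuousAt_inv₀ (det_actDen_ne_zero hM hZ)
  exact (hNum.continuousAt.mul (hinv.comp hDen.continuousAt)).continuousWithinAt

lemma convex_UHP : Convex ℝ (UHP n) := by
  refine convex_iff_forall_pos.2 fun Z hZ Z' hZ' a b ha hb _ => ?_
  have h : imMat (a • Z + b • Z') = a • imMat Z + b • imMat Z' := by
    simp only [imMat, conjTranspose_add, conjTranspose_smul, star_trivial]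
    module
  rw [mem_UHP_iff, h]
  exact ((mem_UHP_iff.1 hZ).smul ha).add ((mem_UHP_iff.1 hZ').smul hb)

lemma iE_mem_UHP : iE n ∈ UHP n := by
  have h : imMat (iE n) = 1 := by
    rw [imMat, iE, conjTranspose_smul, conjTranspose_one, ← sub_smul, smul_smul, star_def,
      conj_I, show (2 * I)⁻¹ * (I - -I) = 1 by field_simp; ring, one_smul]
  rw [mem_UHP_iff, h]
  exact PosDef.one

lemma matAct_one (Z : Matrix (Fin n) (Fin n) ℂ) : matAct (1 : HMat n) Z = Z := by
  simp [matAct_eq, actNum, actDen, ← fromBlocks_one]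

end UnitaryGroupAction

lemma IsPreconnected.eq_of_forall_exists_intCast {α : Type*} [TopologicalSpace α] {S : Set α}
    (hS : IsPreconnected S) {f : α → ℝ} (hf : ContinuousOn f S)
    (hint : ∀ x ∈ S, ∃ k : ℤ, f x = k) {x y : α} (hx : x ∈ S) (hy : y ∈ S) : f x = f y :=
  hS.constant_of_mapsTo Int.isClosedEmbedding_coe_real.isInducing.isDiscrete_range hf
    (fun z hz => (hint z hz).imp fun _ hk => hk.symm) hx hy

lemma Complex.exists_int_div_two_pi_eq_of_exp_mul_I_eq_one {s : ℝ} (h : exp (I * s) = 1) :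
    ∃ k : ℤ, s / (2 * Real.pi) = k := by
  obtain ⟨k, hk⟩ := exp_eq_one_iff.1 h
  refine ⟨k, ?_⟩
  have hs : (s : ℂ) = (k * (2 * Real.pi) : ℝ) := by
    apply mul_left_cancel₀ I_ne_zero
    rw [hk]; push_cast; ring
  rw [ofReal_inj.1 hs, mul_div_assoc, div_self Real.two_pi_pos.ne', mul_one]

namespace IsArgOfJ

open UnitaryGroupAction

variable {n : ℕ} {L : HMat n → Matrix (Fin n) (Fin n) ℂ → ℝ}

lemma exists_int_wAt (hL : IsArgOfJ n L) {M N : HMat n} (hM : M ∈ UGrp n) (hN : N ∈ UGrp n)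
    {Z : Matrix (Fin n) (Fin n) ℂ} (hZ : Z ∈ UHP n) : ∃ k : ℤ, wAt L M N Z = k := by
  have hW := matAct_mem_UHP hN hZ
  have hJM : Jfac M (matAct N Z) ≠ 0 := det_actDen_ne_zero hM hW
  have hJN : Jfac N Z ≠ 0 := det_actDen_ne_zero hN hZ
  apply exists_int_div_two_pi_eq_of_exp_mul_I_eq_one
  rw [ofReal_sub, ofReal_sub, mul_sub, mul_sub, exp_sub, exp_sub,
    (hL _ (mul_mem_UGrp hM hN)).2.1 Z hZ, (hL M hM).2.1 _ hW, (hL N hN).2.1 Z hZ,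
    Jfac_mul M N (isUnit_det_actDen hN hZ), norm_mul, ofReal_mul]
  field_simp

lemma continuousOn_wAt (hL : IsArgOfJ n L) {M N : HMat n} (hM : M ∈ UGrp n) (hN : N ∈ UGrp n) :
    ContinuousOn (wAt L M N) (UHP n) :=
  ((((hL _ (mul_mem_UGrp hM hN)).1).sub ((hL M hM).1.comp (continuousOn_matAct hN)
    fun _ hZ => matAct_mem_UHP hN hZ)).sub (hL N hN).1).div_const _

lemma wAt_eq (hL : IsArgOfJ n L) {M N : HMat n} (hM : M ∈ UGrp n) (hN : N ∈ UGrp n)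
    {Z Z' : Matrix (Fin n) (Fin n) ℂ} (hZ : Z ∈ UHP n) (hZ' : Z' ∈ UHP n) :
    wAt L M N Z = wAt L M N Z' :=
  convex_UHP.isPreconnected.eq_of_forall_exists_intCast (hL.continuousOn_wAt hM hN)
    (fun _ hZ => hL.exists_int_wAt hM hN hZ) hZ hZ'

lemma wAt_mul_add_wAt (hL : IsArgOfJ n L) {M₁ M₂ M₃ : HMat n} (h₁ : M₁ ∈ UGrp n)
    (h₂ : M₂ ∈ UGrp n) (h₃ : M₃ ∈ UGrp n) {Z : Matrix (Fin n) (Fin n) ℂ} (hZ : Z ∈ UHP n) :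
    wAt L (M₁ * M₂) M₃ Z + wAt L M₁ M₂ Z = wAt L M₁ (M₂ * M₃) Z + wAt L M₂ M₃ Z := by
  rw [hL.wAt_eq h₁ h₂ hZ (matAct_mem_UHP h₃ hZ)]
  simp only [wAt]
  rw [mul_assoc, matAct_mul M₂ M₃ (isUnit_det_actDen h₃ hZ)]
  ring

-- `w(E,E;Z) = -L(E,Z)/2π`, so `L(E,·)` is a constant multiple of `2π`, fixed to `0` at `iE`.
lemma L_one_eq_zero (hL : IsArgOfJ n L) {Z : Matrix (Fin n) (Fin n) ℂ} (hZ : Z ∈ UHP n) :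
    L 1 Z = 0 := by
  have hw : ∀ Z, wAt L 1 1 Z = -(L 1 Z / (2 * Real.pi)) := fun Z => by
    rw [wAt, mul_one, matAct_one]; ring
  obtain ⟨k, hk⟩ := hL.exists_int_wAt one_mem_UGrp one_mem_UGrp iE_mem_UHP
  obtain ⟨hlo, hhi⟩ := (hL 1 one_mem_UGrp).2.2
  have hL1 : L 1 (iE n) = -(2 * Real.pi * k) := by
    rw [hw] at hk; field_simp at hk; linarith
  have hk0 : k = 0 := by
    rw [hL1] at hlo hhi
    have hk1 : (k : ℝ) < 1 := by nlinarith [Real.pi_pos]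
    have hk2 : (-1 : ℝ) < k := by nlinarith [Real.pi_pos]
    have : k < 1 := by exact_mod_cast hk1
    have : -1 < k := by exact_mod_cast hk2
    omega
  have := (hL.wAt_eq one_mem_UGrp one_mem_UGrp hZ iE_mem_UHP).trans hk
  rw [hw, hk0, Int.cast_zero, neg_eq_zero, div_eq_zero_iff] at this
  exact this.resolve_right Real.two_pi_pos.ne'

lemma wAt_one_left (hL : IsArgOfJ n L) {M : HMat n} (hM : M ∈ UGrp n)
    {Z : Matrix (Fin n) (Fin n) ℂ} (hZ : Z ∈ UHP n) : wAt L 1 M Z = 0 := by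
  rw [wAt, one_mul, hL.L_one_eq_zero (matAct_mem_UHP hM hZ), sub_zero, sub_self, zero_div]

lemma wAt_one_right (hL : IsArgOfJ n L) (M : HMat n) {Z : Matrix (Fin n) (Fin n) ℂ}
    (hZ : Z ∈ UHP n) : wAt L M 1 Z = 0 := by
  rw [wAt, mul_one, matAct_one, hL.L_one_eq_zero hZ, sub_self, sub_zero, zero_div]

end IsArgOfJ

theorem stmt0 (n : ℕ)
    (L : HMat n → Matrix (Fin n) (Fin n) ℂ → ℝ) (hL : IsArgOfJ n L) :
    (∀ M ∈ UGrp n, ∀ N ∈ UGrp n, ∀ Z ∈ UHP n, ∃ k : ℤ, wAt L M N Z = (k : ℝ)) ∧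
    (∀ M ∈ UGrp n, ∀ N ∈ UGrp n, ∀ Z ∈ UHP n, ∀ Z' ∈ UHP n,
      wAt L M N Z = wAt L M N Z') ∧
    (∀ M₁ ∈ UGrp n, ∀ M₂ ∈ UGrp n, ∀ M₃ ∈ UGrp n, ∀ Z ∈ UHP n,
      wAt L (M₁ * M₂) M₃ Z + wAt L M₁ M₂ Z
        = wAt L M₁ (M₂ * M₃) Z + wAt L M₂ M₃ Z) ∧
    (∀ M ∈ UGrp n, ∀ Z ∈ UHP n, wAt L 1 M Z = 0 ∧ wAt L M 1 Z = 0) := by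
  refine ⟨fun M hM N hN Z hZ => hL.exists_int_wAt hM hN hZ,
    fun M hM N hN Z hZ Z' hZ' => hL.wAt_eq hM hN hZ hZ',
    fun M₁ h₁ M₂ h₂ M₃ h₃ Z hZ => hL.wAt_mul_add_wAt h₁ h₂ h₃ hZ,
    fun M hM Z hZ => ⟨hL.wAt_one_left hM hZ, hL.wAt_one_right M hZ⟩⟩
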